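/- Consider the discrete-time system ξ_{k+1} = A ξ_k + B w_k with output ψ_k = C ξ_k + D w_k. Suppose there exist a symmetric positive definite matrix P and ρ ∈ (0,1) such that for all ξ, w: (Aξ + Bw)ᵀ P (Aξ + Bw) - ρ² ξᵀ P ξ + ψᵀ M ψ ≤ 0 where ψ = Cξ + Dw, and suppose the trajectory satisfies the ρ-hard IQC Σ_{k=0}^{T} ρ^{-2k} ψ_kᵀ M ψ_k ≥ 0 for all T ≥ 0. Then for all k, ‖ξ_k‖ ≤ √(κ_P) ρ^k ‖ξ_0‖, where κ_P is the condition number of P (ratio of largest to smallest eigenvalue). -/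

import Mathlib

/-!
With `V k = ξ kᵀ P ξ k`, the LMI evaluated along the trajectory gives
`V (k+1) ≤ ρ² V k - ψ kᵀ M ψ k`. Unrolling, `ρ^(-2T) V T ≤ V 0 - ρ⁻² ∑_{k<T} ρ^(-2k) ψ kᵀ M ψ k`,
and the hard IQC makes the sum nonnegative, so `V T ≤ ρ^(2T) V 0`. The Rayleigh bounds
`λ_min ‖x‖² ≤ xᵀ P x ≤ λ_max ‖x‖²` convert this into the stated norm estimate.
-/

open Finset Matrix

namespace Matrix

variable {ι : Type*} [Fintype ι]

lemma dotProduct_self_eq_sum_sq (x : ι → ℝ) : x ⬝ᵥ x = ∑ i, x i ^ 2 := by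
  simp only [dotProduct, sq]

variable [DecidableEq ι]

lemma mulVec_dotProduct_mulVec_of_mem_unitaryGroup {U : Matrix ι ι ℝ}
    (hU : U ∈ unitaryGroup ι ℝ) (x y : ι → ℝ) : U *ᵥ x ⬝ᵥ U *ᵥ y = x ⬝ᵥ y := by
  rw [dotProduct_mulVec, ← mulVec_transpose, mulVec_mulVec,
    ← conjTranspose_eq_transpose_of_trivial, ← star_eq_conjTranspose,
    mem_unitaryGroup_iff'.mp hU, one_mulVec]

namespace IsHermitian

variable {P : Matrix ι ι ℝ} (hP : P.IsHermitian)
lemma dotProduct_mulVec_eq_sum_eigenvalues (x : ι → ℝ) :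
    x ⬝ᵥ P *ᵥ x = ∑ i, hP.eigenvalues i *
      (star (hP.eigenvectorUnitary : Matrix ι ι ℝ) *ᵥ x) i ^ 2 := by
  conv_lhs => rw [hP.spectral_theorem, Unitary.conjStarAlgAut_apply]
  rw [← mulVec_mulVec, ← mulVec_mulVec, dotProduct_mulVec, ← mulVec_transpose,
    ← conjTranspose_eq_transpose_of_trivial, ← star_eq_conjTranspose]
  simp only [dotProduct, mulVec_diagonal, Function.comp_apply, RCLike.ofReal_real_eq_id, id]
  exact sum_congr rfl fun i _ => by ring

lemma dotProduct_self_eq_sum_sq_star_eigenvectorUnitary_mulVec (x : ι → ℝ) :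
    x ⬝ᵥ x = ∑ i, (star (hP.eigenvectorUnitary : Matrix ι ι ℝ) *ᵥ x) i ^ 2 := by
  rw [← dotProduct_self_eq_sum_sq, mulVec_dotProduct_mulVec_of_mem_unitaryGroup
    (Unitary.star_mem hP.eigenvectorUnitary.2)]

lemma iInf_eigenvalues_mul_le (x : ι → ℝ) :
    (⨅ i, hP.eigenvalues i) * (x ⬝ᵥ x) ≤ x ⬝ᵥ P *ᵥ x := by
  rw [hP.dotProduct_mulVec_eq_sum_eigenvalues,
    hP.dotProduct_self_eq_sum_sq_star_eigenvectorUnitary_mulVec, mul_sum]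
  exact sum_le_sum fun i _ =>
    mul_le_mul_of_nonneg_right (ciInf_le (Set.finite_range _).bddBelow i) (sq_nonneg _)

lemma le_iSup_eigenvalues_mul (x : ι → ℝ) :
    x ⬝ᵥ P *ᵥ x ≤ (⨆ i, hP.eigenvalues i) * (x ⬝ᵥ x) := by
  rw [hP.dotProduct_mulVec_eq_sum_eigenvalues,
    hP.dotProduct_self_eq_sum_sq_star_eigenvectorUnitary_mulVec, mul_sum]
  exact sum_le_sum fun i _ =>
    mul_le_mul_of_nonneg_right (le_ciSup (Set.finite_range _).bddAbove i) (sq_nonneg _)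

end IsHermitian

lemma PosDef.sqrt_sum_sq_le_of_dotProduct_mulVec_le [Nonempty ι] {P : Matrix ι ι ℝ}
    (hP : P.PosDef) {x y : ι → ℝ} {c : ℝ} (hc : 0 ≤ c)
    (h : x ⬝ᵥ P *ᵥ x ≤ c ^ 2 * (y ⬝ᵥ P *ᵥ y)) :
    √(∑ i, x i ^ 2) ≤
      √((⨆ i, hP.1.eigenvalues i) / (⨅ i, hP.1.eigenvalues i)) * c * √(∑ i, y i ^ 2) := by
  set lmin := ⨅ i, hP.1.eigenvalues i
  set lmax := ⨆ i, hP.1.eigenvalues i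
  have hmin : 0 < lmin := by
    obtain ⟨i, hi⟩ := exists_eq_ciInf_of_finite (f := hP.1.eigenvalues)
    exact (hP.eigenvalues_pos i).trans_eq hi
  have hmax : 0 < lmax := by
    obtain ⟨i, hi⟩ := exists_eq_ciSup_of_finite (f := hP.1.eigenvalues)
    exact (hP.eigenvalues_pos i).trans_eq hi
  rw [← Real.sqrt_sq hc, ← Real.sqrt_mul (by positivity), ← Real.sqrt_mul (by positivity)]
  refine Real.sqrt_le_sqrt ?_
  rw [div_mul_eq_mul_div, div_mul_eq_mul_div, le_div_iff₀ hmin, ← dotProduct_self_eq_sum_sq,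
    ← dotProduct_self_eq_sum_sq]
  calc x ⬝ᵥ x * lmin ≤ x ⬝ᵥ P *ᵥ x := by rw [mul_comm]; exact hP.1.iInf_eigenvalues_mul_le x
    _ ≤ c ^ 2 * (y ⬝ᵥ P *ᵥ y) := h
    _ ≤ c ^ 2 * (lmax * (y ⬝ᵥ y)) := by gcongr; exact hP.1.le_iSup_eigenvalues_mul y
    _ = lmax * c ^ 2 * (y ⬝ᵥ y) := by ring

end Matrix

lemma le_pow_mul_of_le_mul_sub {r : ℝ} (hr : 0 < r) {V q : ℕ → ℝ}
    (hstep : ∀ k, V (k + 1) ≤ r * V k - q k) {T : ℕ}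
    (hsum : 0 ≤ ∑ k ∈ range T, (r ^ k)⁻¹ * q k) : V T ≤ r ^ T * V 0 := by
  have hunrolled : ∀ T, V T ≤ r ^ T * (V 0 - r⁻¹ * ∑ k ∈ range T, (r ^ k)⁻¹ * q k) := by
    intro T
    induction T with
    | zero => simp
    | succ T ih =>
      calc V (T + 1) ≤ r * V T - q T := hstep T
        _ ≤ r * (r ^ T * (V 0 - r⁻¹ * ∑ k ∈ range T, (r ^ k)⁻¹ * q k)) - q T := by gcongr
        _ = _ := by rw [sum_range_succ]; field_simp; ring
  calc V T ≤ r ^ T * (V 0 - r⁻¹ * ∑ k ∈ range T, (r ^ k)⁻¹ * q k) := hunrolled T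
    _ ≤ r ^ T * V 0 := by gcongr; exact sub_le_self _ (by positivity)

theorem stmt4_general {n m s : ℕ} [NeZero n]
    (A : Matrix (Fin n) (Fin n) ℝ) (B : Matrix (Fin n) (Fin m) ℝ)
    (C : Matrix (Fin s) (Fin n) ℝ) (D : Matrix (Fin s) (Fin m) ℝ)
    (M : Matrix (Fin s) (Fin s) ℝ)
    (P : Matrix (Fin n) (Fin n) ℝ) (hP : P.PosDef)
    (ρ : ℝ) (hρ : ρ ∈ Set.Ioo (0 : ℝ) 1)
    (ξ : ℕ → Fin n → ℝ) (w : ℕ → Fin m → ℝ) (ψ : ℕ → Fin s → ℝ)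
    (hdyn : ∀ k, ξ (k + 1) = A.mulVec (ξ k) + B.mulVec (w k))
    (hout : ∀ k, ψ k = C.mulVec (ξ k) + D.mulVec (w k))
    (hLMI : ∀ (x : Fin n → ℝ) (u : Fin m → ℝ),
      (A.mulVec x + B.mulVec u) ⬝ᵥ P.mulVec (A.mulVec x + B.mulVec u)
        - ρ ^ 2 * (x ⬝ᵥ P.mulVec x)
        + (C.mulVec x + D.mulVec u) ⬝ᵥ M.mulVec (C.mulVec x + D.mulVec u) ≤ 0)
    (hIQC : ∀ T : ℕ, 0 ≤ ∑ k ∈ range (T + 1), (ρ ^ (2 * k))⁻¹ * (ψ k ⬝ᵥ M.mulVec (ψ k))) :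
    ∀ k : ℕ, Real.sqrt (∑ i, ξ k i ^ 2) ≤
      Real.sqrt ((⨆ i, hP.1.eigenvalues i) / (⨅ i, hP.1.eigenvalues i)) *
        ρ ^ k * Real.sqrt (∑ i, ξ 0 i ^ 2) := by
  intro k
  have hstep : ∀ j, ξ (j + 1) ⬝ᵥ P *ᵥ ξ (j + 1) ≤
      ρ ^ 2 * (ξ j ⬝ᵥ P *ᵥ ξ j) - ψ j ⬝ᵥ M *ᵥ ψ j := fun j => by
    have := hLMI (ξ j) (w j)
    rw [← hdyn, ← hout] at this
    linarith
  have hsum : 0 ≤ ∑ j ∈ range k, ((ρ ^ 2) ^ j)⁻¹ * (ψ j ⬝ᵥ M *ᵥ ψ j) := by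
    cases k with
    | zero => simp
    | succ k => simpa only [pow_mul] using hIQC k
  have hdecay := le_pow_mul_of_le_mul_sub (V := fun j => ξ j ⬝ᵥ P *ᵥ ξ j) (pow_pos hρ.1 2) hstep hsum
  rw [← pow_mul, mul_comm 2 k, pow_mul] at hdecay
  exact hP.sqrt_sum_sq_le_of_dotProduct_mulVec_le (pow_nonneg hρ.1.le k) hdecay

/-- Lyapunov/IQC argument: LMI plus ρ-hard IQC implies exponential decay
of the state with rate ρ and overshoot √(κ_P). -/
theorem stmt4 {n m s : ℕ} [NeZero n]
    (A : Matrix (Fin n) (Fin n) ℝ) (B : Matrix (Fin n) (Fin m) ℝ)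
    (C : Matrix (Fin s) (Fin n) ℝ) (D : Matrix (Fin s) (Fin m) ℝ)
    (M : Matrix (Fin s) (Fin s) ℝ) (hM : M.IsSymm)
    (P : Matrix (Fin n) (Fin n) ℝ) (hP : P.PosDef)
    (ρ : ℝ) (hρ : ρ ∈ Set.Ioo (0 : ℝ) 1)
    (ξ : ℕ → Fin n → ℝ) (w : ℕ → Fin m → ℝ) (ψ : ℕ → Fin s → ℝ)
    (hdyn : ∀ k, ξ (k + 1) = A.mulVec (ξ k) + B.mulVec (w k))
    (hout : ∀ k, ψ k = C.mulVec (ξ k) + D.mulVec (w k))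
    (hLMI : ∀ (x : Fin n → ℝ) (u : Fin m → ℝ),
      (A.mulVec x + B.mulVec u) ⬝ᵥ P.mulVec (A.mulVec x + B.mulVec u)
        - ρ ^ 2 * (x ⬝ᵥ P.mulVec x)
        + (C.mulVec x + D.mulVec u) ⬝ᵥ M.mulVec (C.mulVec x + D.mulVec u) ≤ 0)
    (hIQC : ∀ T : ℕ, 0 ≤ ∑ k ∈ range (T + 1), (ρ ^ (2 * k))⁻¹ * (ψ k ⬝ᵥ M.mulVec (ψ k))) :
    ∀ k : ℕ, Real.sqrt (∑ i, ξ k i ^ 2) ≤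
      Real.sqrt ((⨆ i, hP.1.eigenvalues i) / (⨅ i, hP.1.eigenvalues i)) *
        ρ ^ k * Real.sqrt (∑ i, ξ 0 i ^ 2) :=
  stmt4_general A B C D M P hP ρ hρ ξ w ψ hdyn hout hLMI hIQC
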